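/- Let f : ℝ → ℝ satisfy f(0) = 0 and be slope-restricted to [0,1], and let F : ℝ^m → ℝ^m apply f componentwise. If Q₀ ∈ ℝ^{m×m} is doubly hyperdominant (off-diagonal entries nonpositive, all row sums and all column sums nonnegative), then for all v ∈ ℝ^m with w = F(v): vᵀ Q₀ᵀ w + wᵀ Q₀ v − wᵀ (Q₀ + Q₀ᵀ) w ≥ 0. -/

import Mathlib

open Matrix Finset

/-!
Write `u = v - w`. The quadratic form equals `2 wᵀ Q₀ u`, and since `f` and `x ↦ x - f x` are both
nondecreasing and vanish at `0`, the vectors `w` and `u` are similarly ordered and `wᵢ uᵢ ≥ 0`.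
Splitting into positive and negative parts, the cross terms pair vectors with disjoint supports and
are `≤ 0` because `Q₀` has nonpositive off-diagonal entries. Each remaining term pairs two
nonnegative similarly ordered vectors; by the layer-cake decomposition these are nonnegative
combinations of indicators of superlevel sets, and similar ordering makes any two such sets
nested. For `A ⊆ B`, each row `i ∈ A` of `Q₀` summed over `B` is at least its full row sum, since
the omitted entries are off-diagonal; the case `B ⊆ A` is the same with column sums.
-/

theorem monotone_of_slope_nonneg {f : ℝ → ℝ}
    (h : ∀ a b, a ≠ b → 0 ≤ (f b - f a) / (b - a)) : Monotone f := by
  intro a b hab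
  rcases hab.eq_or_lt with rfl | hlt
  · rfl
  · have := (le_div_iff₀ (sub_pos.2 hlt)).1 (h a b hlt.ne)
    linarith

theorem monotone_id_sub_of_slope_le_one {f : ℝ → ℝ}
    (h : ∀ a b, a ≠ b → (f b - f a) / (b - a) ≤ 1) : Monotone fun x => x - f x := by
  intro a b hab
  rcases hab.eq_or_lt with rfl | hlt
  · rfl
  · have := (div_le_one (sub_pos.2 hlt)).1 (h a b hlt.ne)
    dsimp only
    linarith

theorem mul_nonneg_of_monotone_of_map_zero {α β : Type*} [LinearOrder α] [Zero α]
    [Ring β] [LinearOrder β] [IsStrictOrderedRing β] {f g : α → β} (hf : Monotone f)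
    (hg : Monotone g) (hf0 : f 0 = 0) (hg0 : g 0 = 0) (x : α) : 0 ≤ f x * g x := by
  rcases le_total 0 x with hx | hx
  · exact mul_nonneg (hf0 ▸ hf hx) (hg0 ▸ hg hx)
  · exact mul_nonneg_of_nonpos_of_nonpos (hf0 ▸ hf hx) (hg0 ▸ hg hx)

theorem posPart_mul_negPart_eq_zero {α : Type*} [Ring α] [LinearOrder α] [IsStrictOrderedRing α]
    {a b : α} (h : 0 ≤ a * b) : a⁺ * b⁻ = 0 := by
  rcases le_or_gt a 0 with ha | ha
  · rw [posPart_eq_zero.2 ha, zero_mul]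
  · rw [negPart_eq_zero.2 (nonneg_of_mul_nonneg_right h ha), mul_zero]

theorem Monovary.superlevel_subset_or_superset {ι α β : Type*} [LinearOrder α] [LinearOrder β]
    {X : ι → α} {Y : ι → β} (h : Monovary X Y) (s : α) (t : β) :
    {i | s < X i} ⊆ {i | t < Y i} ∨ {i | t < Y i} ⊆ {i | s < X i} := by
  by_contra! hcon
  obtain ⟨⟨i, hXi, hYi⟩, ⟨j, hYj, hXj⟩⟩ := And.imp Set.not_subset.1 Set.not_subset.1 hcon
  exact (h ((not_lt.1 hYi).trans_lt hYj)).not_gt ((not_lt.1 hXj).trans_lt hXi)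

theorem PointedCone.apply_nonneg_of_mem_hull {R M N : Type*} [CommSemiring R] [PartialOrder R]
    [IsOrderedRing R] [AddCommMonoid M] [Module R M] [AddCommMonoid N] [Module R N]
    {p : M →ₗ[R] N →ₗ[R] R} {s : Set M} {t : Set N} (hst : ∀ x ∈ s, ∀ y ∈ t, 0 ≤ p x y)
    {x : M} {y : N} (hx : x ∈ hull R s) (hy : y ∈ hull R t) : 0 ≤ p x y := by
  have : hull R t ≤ dual p (hull R s) := by
    rw [dual_hull]
    exact Submodule.span_le.2 fun y hy x hx => hst x hx y hy
  exact this hy hx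

section LayerCake

variable {ι : Type*}

def superlevelIndicators (X : ι → ℝ) : Set (ι → ℝ) :=
  (fun t => {i | t < X i}.indicator 1) '' Set.Ici 0

theorem superlevelIndicators_sub_smul_subset (X : ι → ℝ) {a : ℝ} (ha : 0 ≤ a) :
    superlevelIndicators (X - a • {i | 0 < X i}.indicator 1) ⊆ superlevelIndicators X := by
  rintro _ ⟨t, ht, rfl⟩
  refine ⟨t + a, add_nonneg ht ha, congrArg (Set.indicator · 1) (Set.ext fun i => ?_)⟩
  change t + a < X i ↔ t < X i - a • {i | 0 < X i}.indicator 1 i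
  by_cases hi : 0 < X i
  · simp [hi, lt_sub_iff_add_lt]
  · have : X i ≤ t := (not_lt.1 hi).trans ht
    rw [Set.indicator_of_notMem (s := {i | 0 < X i}) hi, smul_zero, sub_zero]
    constructor <;> intro h <;> linarith

theorem mem_hull_superlevelIndicators [Fintype ι] {X : ι → ℝ} (hX : 0 ≤ X) :
    X ∈ PointedCone.hull ℝ (superlevelIndicators X) := by
  classical
  induction hn : #{i | 0 < X i} using Nat.strong_induction_on generalizing X with
  | _ n ih =>
  by_cases hpos : ∃ k, 0 < X k
  swap
  · push Not at hpos
    obtain rfl : X = 0 := funext fun i => (hpos i).antisymm (hX i)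
    exact zero_mem _
  obtain ⟨k₀, hk₀⟩ := hpos
  -- peel off the bottom layer, of height the least positive value `X k`
  obtain ⟨k, hk, hmin⟩ := exists_min_image {i | 0 < X i} X ⟨k₀, by simpa using hk₀⟩
  replace hk : 0 < X k := (mem_filter.1 hk).2
  set g := {i | 0 < X i}.indicator (1 : ι → ℝ)
  set X' := X - X k • g
  have hX'_apply (i : ι) : X' i = if 0 < X i then X i - X k else X i := by
    by_cases hi : 0 < X i <;> simp [X', g, hi]
  have hX' : 0 ≤ X' := fun i => by
    rw [Pi.zero_apply, hX'_apply]
    split_ifs with hi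
    · exact sub_nonneg.2 (hmin i (by simpa using hi))
    · exact hX i
  have hcard : #{i | 0 < X' i} < n := by
    refine hn ▸ card_lt_card ⟨monotone_filter_right _ fun i _ hi => ?_, fun hsub => ?_⟩
    · rw [hX'_apply] at hi
      split_ifs at hi with h
      exacts [h, hi]
    · have := (mem_filter.1 (hsub (mem_filter.2 ⟨mem_univ k, hk⟩))).2
      simp [hX'_apply, hk] at this
  have hsplit : X k • g + X' ∈ PointedCone.hull ℝ (superlevelIndicators X) :=
    add_mem (PointedCone.smul_mem _ (hX k)
        (Submodule.subset_span (Set.mem_image_of_mem _ (le_refl (0 : ℝ)))))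
      (Submodule.span_mono (superlevelIndicators_sub_smul_subset X (hX k)) (ih _ hcard hX' rfl))
  rwa [add_sub_cancel] at hsplit

end LayerCake

structure Matrix.IsDoublyHyperdominant {ι : Type*} [Fintype ι] (Q : Matrix ι ι ℝ) : Prop where
  offDiag_nonpos : ∀ i j, i ≠ j → Q i j ≤ 0
  rowSum_nonneg : ∀ i, 0 ≤ ∑ j, Q i j
  colSum_nonneg : ∀ j, 0 ≤ ∑ i, Q i j

namespace Matrix

variable {ι : Type*} [Fintype ι] {Q : Matrix ι ι ℝ}

theorem dotProduct_mulVec_nonpos_of_mul_eq_zero (hQ : ∀ i j, i ≠ j → Q i j ≤ 0) {X Y : ι → ℝ}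
    (hX : 0 ≤ X) (hY : 0 ≤ Y) (hXY : ∀ i, X i * Y i = 0) : X ⬝ᵥ (Q *ᵥ Y) ≤ 0 := by
  simp only [dotProduct, mulVec, mul_sum]
  refine sum_nonpos fun i _ => sum_nonpos fun j _ => ?_
  rcases eq_or_ne i j with rfl | hij
  · rw [mul_left_comm, hXY, mul_zero]
  · exact mul_nonpos_of_nonneg_of_nonpos (hX i)
      (mul_nonpos_of_nonpos_of_nonneg (hQ i j hij) (hY j))

namespace IsDoublyHyperdominant

theorem transpose (hQ : Q.IsDoublyHyperdominant) : Qᵀ.IsDoublyHyperdominant :=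
  ⟨fun i j hij => hQ.offDiag_nonpos j i hij.symm, hQ.colSum_nonneg, hQ.rowSum_nonneg⟩

theorem mulVec_indicator_nonneg (hQ : Q.IsDoublyHyperdominant) {B : Set ι} {i : ι} (hi : i ∈ B) :
    0 ≤ (Q *ᵥ B.indicator 1) i := by
  classical
  refine (hQ.rowSum_nonneg i).trans (sum_le_sum fun j _ => ?_)
  by_cases hj : j ∈ B
  · simp [hj]
  · simpa [hj] using hQ.offDiag_nonpos i j (ne_of_mem_of_not_mem hi hj)

theorem indicator_dotProduct_mulVec_indicator_nonneg_of_subset (hQ : Q.IsDoublyHyperdominant)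
    {A B : Set ι} (hAB : A ⊆ B) : 0 ≤ A.indicator 1 ⬝ᵥ (Q *ᵥ B.indicator 1) := by
  classical
  refine sum_nonneg fun i _ => ?_
  by_cases hi : i ∈ A
  · simpa [hi] using hQ.mulVec_indicator_nonneg (hAB hi)
  · simp [hi]

theorem indicator_dotProduct_mulVec_indicator_nonneg (hQ : Q.IsDoublyHyperdominant)
    {A B : Set ι} (hAB : A ⊆ B ∨ B ⊆ A) : 0 ≤ A.indicator 1 ⬝ᵥ (Q *ᵥ B.indicator 1) := by
  rcases hAB with hAB | hBA
  · exact hQ.indicator_dotProduct_mulVec_indicator_nonneg_of_subset hAB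
  · rw [← dotProduct_transpose_mulVec]
    exact hQ.transpose.indicator_dotProduct_mulVec_indicator_nonneg_of_subset hBA

theorem dotProduct_mulVec_nonneg_of_nonneg_of_monovary (hQ : Q.IsDoublyHyperdominant)
    {X Y : ι → ℝ} (hX : 0 ≤ X) (hY : 0 ≤ Y) (hXY : Monovary X Y) : 0 ≤ X ⬝ᵥ (Q *ᵥ Y) := by
  classical
  rw [← toLinearMap₂'_apply']
  refine PointedCone.apply_nonneg_of_mem_hull ?_ (mem_hull_superlevelIndicators hX)
    (mem_hull_superlevelIndicators hY)
  rintro _ ⟨s, -, rfl⟩ _ ⟨t, -, rfl⟩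
  rw [toLinearMap₂'_apply']
  exact hQ.indicator_dotProduct_mulVec_indicator_nonneg (hXY.superlevel_subset_or_superset s t)

theorem dotProduct_mulVec_nonneg_of_monovary (hQ : Q.IsDoublyHyperdominant) {X Y : ι → ℝ}
    (hXY : Monovary X Y) (hsign : ∀ i, 0 ≤ X i * Y i) : 0 ≤ X ⬝ᵥ (Q *ᵥ Y) := by
  have hpos : 0 ≤ X⁺ ⬝ᵥ (Q *ᵥ Y⁺) :=
    hQ.dotProduct_mulVec_nonneg_of_nonneg_of_monovary (posPart_nonneg X) (posPart_nonneg Y)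
      fun i j h => posPart_mono (hXY (posPart_mono.reflect_lt h))
  have hneg : 0 ≤ X⁻ ⬝ᵥ (Q *ᵥ Y⁻) :=
    hQ.dotProduct_mulVec_nonneg_of_nonneg_of_monovary (negPart_nonneg X) (negPart_nonneg Y)
      fun i j h => negPart_anti (hXY (negPart_anti.reflect_lt h))
  have hcross₁ : X⁺ ⬝ᵥ (Q *ᵥ Y⁻) ≤ 0 :=
    dotProduct_mulVec_nonpos_of_mul_eq_zero hQ.offDiag_nonpos (posPart_nonneg X)
      (negPart_nonneg Y) fun i => posPart_mul_negPart_eq_zero (hsign i)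
  have hcross₂ : X⁻ ⬝ᵥ (Q *ᵥ Y⁺) ≤ 0 :=
    dotProduct_mulVec_nonpos_of_mul_eq_zero hQ.offDiag_nonpos (negPart_nonneg X)
      (posPart_nonneg Y) fun i => by
        rw [Pi.negPart_apply, Pi.posPart_apply, mul_comm]
        exact posPart_mul_negPart_eq_zero (mul_comm (X i) (Y i) ▸ hsign i)
  rw [← posPart_sub_negPart X, ← posPart_sub_negPart Y]
  simp only [mulVec_sub, dotProduct_sub, sub_dotProduct]
  linarith

end IsDoublyHyperdominant
end Matrix

/-- Static QC for repeated slope-restricted nonlinearity with a doubly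
hyperdominant multiplier (Lemma 2). -/
theorem slope_restricted_doubly_hyperdominant_QC (m : ℕ)
    (f : ℝ → ℝ) (hf0 : f 0 = 0)
    (hslope : ∀ a b : ℝ, a ≠ b →
      0 ≤ (f b - f a) / (b - a) ∧ (f b - f a) / (b - a) ≤ 1)
    (Q₀ : Matrix (Fin m) (Fin m) ℝ)
    (hoff : ∀ i j, i ≠ j → Q₀ i j ≤ 0)
    (hrow : ∀ i, 0 ≤ ∑ j, Q₀ i j)
    (hcol : ∀ j, 0 ≤ ∑ i, Q₀ i j)
    (v w : Fin m → ℝ) (hw : ∀ i, w i = f (v i)) :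
    0 ≤ v ⬝ᵥ (Q₀ᵀ *ᵥ w) + w ⬝ᵥ (Q₀ *ᵥ v) - w ⬝ᵥ ((Q₀ + Q₀ᵀ) *ᵥ w) := by
  have hQ : Q₀.IsDoublyHyperdominant := ⟨hoff, hrow, hcol⟩
  have hf : Monotone f := monotone_of_slope_nonneg fun a b h => (hslope a b h).1
  have hg : Monotone fun x => x - f x :=
    monotone_id_sub_of_slope_le_one fun a b h => (hslope a b h).2
  have hw' : w = f ∘ v := funext hw
  have hexpand : v ⬝ᵥ (Q₀ᵀ *ᵥ w) + w ⬝ᵥ (Q₀ *ᵥ v) - w ⬝ᵥ ((Q₀ + Q₀ᵀ) *ᵥ w)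
      = 2 * (w ⬝ᵥ (Q₀ *ᵥ (v - w))) := by
    rw [dotProduct_transpose_mulVec, add_mulVec, dotProduct_add, dotProduct_transpose_mulVec,
      mulVec_sub, dotProduct_sub]
    ring
  have hvw : v - w = (fun x => x - f x) ∘ v := by
    rw [hw']
    rfl
  rw [hexpand, hvw, hw']
  exact mul_nonneg zero_le_two (hQ.dotProduct_mulVec_nonneg_of_monovary
    ((hf.monovary hg).comp_right v)
    fun i => mul_nonneg_of_monotone_of_map_zero hf hg hf0 (sub_eq_zero.2 hf0.symm) (v i))
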